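/- arXiv:1511.07009 — 7 statements merged into one kernel-verified Lean document; each statement's English description precedes it below -/
import Mathlib

section
/- Let b, c be positive integers and β, γ nonzero integers with β+γ=1. Suppose y, z are nonzero integers with z=1−y and bβy=−cγz. If γ≥2 (hence β≤−1), then y=cγ/(cγ−bβ) is not an integer; more precisely, there exist integers p,q≥3 with y=p/(p+q), a contradiction. Hence no such integer y exists. -/
theorem stmt_1 (b c : ℤ) (hb : 0 < b) (hc : 0 < c)
    (β γ : ℤ) (hβ : β ≠ 0) (hγ : γ ≠ 0) (hsum : β + γ = 1) (hγ2 : 2 ≤ γ) :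
    ¬ ∃ y z : ℤ, y ≠ 0 ∧ z ≠ 0 ∧ z = 1 - y ∧ b * β * y = -(c * γ * z) := by
  rintro ⟨y, z, hy, hz, rfl, heq⟩
  have hβval : β = 1 - γ := by omega
  subst hβval
  -- key: y * (c*γ - b*(1-γ)) = c*γ, with 0 < c*γ < c*γ - b*(1-γ)
  have key : y * (c * γ - b * (1 - γ)) = c * γ := by ring_nf; ring_nf at heq; linarith
  have h1 : 0 < c * γ := by positivity
  have h2 : c * γ < c * γ - b * (1 - γ) := by nlinarith
  rcases lt_or_ge y 1 with h | h
  · nlinarith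
  · nlinarith
end

section
/- Let a ≤ b ≤ c be positive integers and suppose integers α, β, γ, x, y, z satisfy the Embedding Conditions α+β+γ=1, x+y+z=1, aαx+bβy+cγz=0, aα²+bβ²+cγ²=d, ax²+by²+cz²=e, with all six of α,β,γ,x,y,z nonzero. Then d ≥ a+b+c and e ≥ a+b+c. -/
lemma sq1 (t : ℤ) (h : t ≠ 0) : 1 ≤ t ^ 2 := by
  have h1 : 1 ≤ |t| := Int.one_le_abs h
  nlinarith [sq_abs t, abs_nonneg t]

theorem stmt_2 (a b c d e : ℤ) (ha : 0 < a) (hab : a ≤ b) (hbc : b ≤ c)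
    (α β γ x y z : ℤ)
    (h1 : α + β + γ = 1) (h2 : x + y + z = 1)
    (h3 : a * α * x + b * β * y + c * γ * z = 0)
    (h4 : a * α ^ 2 + b * β ^ 2 + c * γ ^ 2 = d)
    (h5 : a * x ^ 2 + b * y ^ 2 + c * z ^ 2 = e)
    (hα : α ≠ 0) (hβ : β ≠ 0) (hγ : γ ≠ 0)
    (hx : x ≠ 0) (hy : y ≠ 0) (hz : z ≠ 0) :
    a + b + c ≤ d ∧ a + b + c ≤ e := by
  have hb : 0 < b := lt_of_lt_of_le ha hab
  have hc : 0 < c := lt_of_lt_of_le hb hbc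
  constructor
  · nlinarith [sq1 α hα, sq1 β hβ, sq1 γ hγ]
  · nlinarith [sq1 x hx, sq1 y hy, sq1 z hz]
end

section
/- Let a, b, c be integers with 3 ≤ a ≤ b ≤ c, and let d ≥ 4a+b and e ≥ a+b+c. Then abd(e−c) + bce(d−a) + acde > (ab + ac + bc + a + b + c + 1)². -/
theorem stmt_5 (a b c d e : ℤ) (ha : 3 ≤ a) (hab : a ≤ b) (hbc : b ≤ c)
    (hd : 4 * a + b ≤ d) (he : a + b + c ≤ e) :
    a * b * d * (e - c) + b * c * e * (d - a) + a * c * d * e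
      > (a * b + a * c + b * c + a + b + c + 1) ^ 2 := by
  have hx : 0 ≤ a - 3 := by linarith
  have hy : 0 ≤ b - a := by linarith
  have hz : 0 ≤ c - b := by linarith
  have hec : 0 < e - c := by linarith
  have hb : (0:ℤ) < b := by linarith
  have hc : (0:ℤ) < c := by linarith
  have hee : (0:ℤ) < e := by linarith
  have h1 : 0 ≤ (d - (4*a+b)) * (a*b*(e-c) + b*c*e + a*c*e) := by
    apply mul_nonneg (by linarith)
    have := mul_pos (mul_pos (by linarith : (0:ℤ) < a) hb) hec
    have := mul_pos (mul_pos hb hc) hee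
    have := mul_pos (mul_pos (by linarith : (0:ℤ) < a) hc) hee
    nlinarith
  have h2 : 0 ≤ (e - (a+b+c)) * (a*b*(4*a+b) + b*c*(3*a+b) + a*c*(4*a+b)) := by
    apply mul_nonneg (by linarith)
    have := mul_pos (mul_pos (by linarith : (0:ℤ) < a) hb) (by linarith : (0:ℤ) < 4*a+b)
    have := mul_pos (mul_pos hb hc) (by linarith : (0:ℤ) < 3*a+b)
    have := mul_pos (mul_pos (by linarith : (0:ℤ) < a) hc) (by linarith : (0:ℤ) < 4*a+b)
    linarith
  nlinarith [h1, h2, mul_nonneg hx hy, mul_nonneg hy hz, mul_nonneg hx hz,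
    mul_nonneg hx hx, mul_nonneg hy hy, mul_nonneg hz hz,
    mul_nonneg (mul_nonneg hx hy) hz, mul_nonneg (mul_nonneg hx hx) hy,
    mul_nonneg (mul_nonneg hx hx) hz, mul_nonneg (mul_nonneg hy hy) hz,
    mul_nonneg (mul_nonneg hx hy) hy, mul_nonneg (mul_nonneg hx hz) hz,
    mul_nonneg (mul_nonneg hy hz) hz]
end

section
/- Let a, b, c be integers with 3 ≤ a ≤ b ≤ c, and suppose d ≥ a+b+c and e ≥ a+b+c. Then abd(e−c) + bce(d−a) + acde > (ab + ac + bc + a + b + c + 1)². -/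
theorem stmt_6 (a b c d e : ℤ) (ha : 3 ≤ a) (hab : a ≤ b) (hbc : b ≤ c)
    (hd : a + b + c ≤ d) (he : a + b + c ≤ e) :
    a * b * d * (e - c) + b * c * e * (d - a) + a * c * d * e
      > (a * b + a * c + b * c + a + b + c + 1) ^ 2 := by
  have hx : (0:ℤ) ≤ a - 3 := by linarith
  have hy : (0:ℤ) ≤ b - a := by linarith
  have hz : (0:ℤ) ≤ c - b := by linarith
  have hec : (0:ℤ) ≤ e - c := by linarith
  have hcoef : (0:ℤ) ≤ a*b*(e-c) + b*c*e + a*c*e := by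
    have : (0:ℤ) ≤ e := by linarith
    have hab' : (0:ℤ) ≤ a*b := mul_nonneg (by linarith) (by linarith)
    nlinarith [mul_nonneg hab' hec, mul_nonneg (mul_nonneg (by linarith : (0:ℤ) ≤ b) (by linarith : (0:ℤ) ≤ c)) this, mul_nonneg (mul_nonneg (by linarith : (0:ℤ) ≤ a) (by linarith : (0:ℤ) ≤ c)) this]
  have h1 : a*b*(a+b+c)*(e-c) + b*c*e*((a+b+c)-a) + a*c*(a+b+c)*e
      ≤ a * b * d * (e - c) + b * c * e * (d - a) + a * c * d * e := by
    nlinarith [mul_nonneg (sub_nonneg.2 hd) hcoef]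
  have hcoef2 : (0:ℤ) ≤ a*b*(a+b+c) + b*c*(b+c) + a*c*(a+b+c) := by nlinarith [mul_nonneg (mul_nonneg (by linarith : (0:ℤ) ≤ a) (by linarith : (0:ℤ) ≤ b)) (by linarith : (0:ℤ) ≤ a+b+c), mul_nonneg (mul_nonneg (by linarith : (0:ℤ) ≤ b) (by linarith : (0:ℤ) ≤ c)) (by linarith : (0:ℤ) ≤ b+c), mul_nonneg (mul_nonneg (by linarith : (0:ℤ) ≤ a) (by linarith : (0:ℤ) ≤ c)) (by linarith : (0:ℤ) ≤ a+b+c)]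
  have h2 : a*b*(a+b+c)*((a+b+c)-c) + b*c*(a+b+c)*((a+b+c)-a) + a*c*(a+b+c)*(a+b+c)
      ≤ a*b*(a+b+c)*(e-c) + b*c*e*((a+b+c)-a) + a*c*(a+b+c)*e := by
    nlinarith [mul_nonneg (sub_nonneg.2 he) hcoef2]
  have h3 : a*b*(a+b+c)*((a+b+c)-c) + b*c*(a+b+c)*((a+b+c)-a) + a*c*(a+b+c)*(a+b+c)
      > (a * b + a * c + b * c + a + b + c + 1) ^ 2 := by
    nlinarith [mul_nonneg hx hx, mul_nonneg hx hy, mul_nonneg hx hz, mul_nonneg hy hy,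
      mul_nonneg hy hz, mul_nonneg hz hz, hx, hy, hz,
      mul_nonneg (mul_nonneg hx hx) (mul_nonneg hx hx),
      mul_nonneg (mul_nonneg hy hy) (mul_nonneg hy hy),
      mul_nonneg (mul_nonneg hz hz) (mul_nonneg hz hz)]
  linarith
end

section
/- Let a, b, c be odd positive integers. There do not exist integers α, β, γ, x, y, z satisfying the Embedding Conditions with d = 4a+b (i.e., α=±2, β=∓1, γ=0) and e = a+b+c (i.e., |x|=|y|=|z|=1). In particular, aαx+bβy+cγz=0 would force 2a = ±b, contradicting b odd. -/
theorem stmt_7 (a b c : ℤ) (ha : 0 < a) (hb : 0 < b) (hc : 0 < c)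
    (hoa : Odd a) (hob : Odd b) (hoc : Odd c) :
    ¬ ∃ α β γ x y z : ℤ,
      α + β + γ = 1 ∧ x + y + z = 1 ∧
      a * α * x + b * β * y + c * γ * z = 0 ∧
      a * α ^ 2 + b * β ^ 2 + c * γ ^ 2 = 4 * a + b ∧
      a * x ^ 2 + b * y ^ 2 + c * z ^ 2 = a + b + c ∧
      |α| = 2 ∧ |β| = 1 ∧ γ = 0 ∧ |x| = 1 ∧ |y| = 1 ∧ |z| = 1 := by
  rintro ⟨α, β, γ, x, y, z, h1, h2, h3, h4, h5, hα, hβ, hγ, hx, hy, hz⟩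
  obtain ⟨m, hm⟩ := hob
  rcases (abs_eq (by norm_num)).mp hα with hA | hA <;>
  rcases (abs_eq (by norm_num)).mp hβ with hB | hB <;>
  rcases (abs_eq (by norm_num)).mp hx with hX | hX <;>
  rcases (abs_eq (by norm_num)).mp hy with hY | hY <;>
    subst hA hB hX hY hγ hm <;> simp at h3 <;> omega
end

section
/- The symmetric (k+1)×(k+1) matrix Q with Q₀₀ = 0, Q₀ᵢ = Qᵢ₀ = 1 for 1 ≤ i ≤ k, Qᵢᵢ = pᵢ (where p₁,...,p_k are nonzero integers) and all other entries 0, is congruent over ℝ to the diagonal matrix diag(−ê, p₁, ..., p_k), where ê = Σᵢ 1/pᵢ. Consequently its signature equals s − sgn(ê), where s = Σᵢ sgn(pᵢ). -/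
/-!
Eliminating the central vertex is a Schur complement step: subtracting `1/pᵢ` times the row and
column of leaf `i` from those of the central vertex clears every off-diagonal entry and leaves
`-Σ 1/pᵢ` in the corner. The signature is then read off the diagonal by Sylvester's law of
inertia, whose proof is a dimension count: a subspace on which a quadratic form is positive
definite meets one on which it is negative semidefinite only in `0`.
-/

open Matrix Finset Module

theorem Submodule.finrank_add_finrank_le_of_pos_of_nonpos {V : Type*} [AddCommGroup V]
    [Module ℝ V] [FiniteDimensional ℝ V] (q : V → ℝ) {W Z : Submodule ℝ V}
    (hW : ∀ x ∈ W, x ≠ 0 → 0 < q x) (hZ : ∀ x ∈ Z, q x ≤ 0) :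
    finrank ℝ W + finrank ℝ Z ≤ finrank ℝ V := by
  refine finrank_add_finrank_le_of_disjoint (disjoint_def.2 fun x hxW hxZ => ?_)
  by_contra hx
  exact (hW x hxW hx).not_ge (hZ x hxZ)

theorem Finset.card_pos_sub_card_neg_eq_sum_sign {ι α : Type*} [Fintype ι] [Zero α]
    [LinearOrder α] (f : ι → α) :
    (#{i | 0 < f i} : ℤ) - #{i | f i < 0} = ∑ i, (SignType.sign (f i) : ℤ) := by
  have hsign : ∀ a : α,
      (SignType.sign a : ℤ) = (if 0 < a then 1 else 0) - (if a < 0 then 1 else 0) := by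
    intro a
    rcases lt_trichotomy a 0 with h | h | h
    · simp [h, h.not_gt]
    · simp [h]
    · simp [h, h.not_gt]
  simp only [hsign, sum_sub_distrib, sum_boole]

namespace Matrix

theorem transpose_mul_fromBlocks_mul_eq_schur {l m α : Type*} [Fintype l] [Fintype m]
    [DecidableEq l] [DecidableEq m] [CommRing α] (A : Matrix l l α) (B : Matrix l m α)
    {D : Matrix m m α} (hD : IsUnit D.det) (hDt : Dᵀ = D) :
    (fromBlocks 1 0 (-(D⁻¹ * Bᵀ)) 1)ᵀ * fromBlocks A B Bᵀ D * fromBlocks 1 0 (-(D⁻¹ * Bᵀ)) 1 =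
      fromBlocks (A - B * D⁻¹ * Bᵀ) 0 0 D := by
  have hDinv : D⁻¹ᵀ = D⁻¹ := by rw [transpose_nonsing_inv, hDt]
  simp [fromBlocks_transpose, fromBlocks_multiply, Matrix.mul_assoc, hDinv,
    nonsing_inv_mul _ hD, mul_nonsing_inv_cancel_left _ _ hD, sub_eq_add_neg]

theorem dotProduct_mulVec_mulVec_self {n α : Type*} [Fintype n] [CommSemiring α]
    (A M : Matrix n n α) (y : n → α) :
    M *ᵥ y ⬝ᵥ A *ᵥ (M *ᵥ y) = y ⬝ᵥ (Mᵀ * A * M) *ᵥ y := by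
  rw [dotProduct_mulVec, dotProduct_mulVec, ← vecMul_transpose, vecMul_vecMul, vecMul_vecMul,
    Matrix.mul_assoc, dotProduct_mulVec]

section CoordSubspace

variable {n : Type*} [DecidableEq n]

noncomputable def coordSubspace (S : Finset n) : Submodule ℝ (n → ℝ) :=
  Submodule.span ℝ (Set.range fun i : S => Pi.single (i : n) 1)

theorem finrank_coordSubspace [Fintype n] (S : Finset n) :
    finrank ℝ (coordSubspace S) = #S := by
  rw [coordSubspace, finrank_span_eq_card, Fintype.card_coe]
  exact (Pi.linearIndependent_single_one n ℝ).comp _ Subtype.val_injective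

theorem apply_eq_zero_of_mem_coordSubspace {S : Finset n} {x : n → ℝ}
    (hx : x ∈ coordSubspace S) {j : n} (hj : j ∉ S) : x j = 0 := by
  refine Submodule.span_induction ?_ (by simp) (fun x y _ _ hx hy => by simp [hx, hy])
    (fun c x _ hx => by simp [hx]) hx
  rintro _ ⟨i, rfl⟩
  exact Pi.single_eq_of_ne (by rintro rfl; exact hj i.2) 1

variable [Fintype n]

theorem dotProduct_diagonal_mulVec_self (w x : n → ℝ) :
    x ⬝ᵥ diagonal w *ᵥ x = ∑ i, w i * x i ^ 2 := by
  simp only [dotProduct, mulVec_diagonal]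
  exact Finset.sum_congr rfl fun i _ => by ring

theorem dotProduct_diagonal_mulVec_self_pos {w x : n → ℝ}
    (hx : x ∈ coordSubspace {i | 0 < w i}) (hx0 : x ≠ 0) : 0 < x ⬝ᵥ diagonal w *ᵥ x := by
  have hsupp : ∀ j, ¬ 0 < w j → x j = 0 := fun j hj =>
    apply_eq_zero_of_mem_coordSubspace hx (by simpa using hj)
  obtain ⟨j, hj⟩ := Function.ne_iff.mp hx0
  rw [dotProduct_diagonal_mulVec_self]
  refine Finset.sum_pos' (fun i _ => ?_) ⟨j, mem_univ j, ?_⟩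
  · by_cases h : 0 < w i
    · positivity
    · simp [hsupp i h]
  · have hwj : 0 < w j := by_contra fun h => hj (hsupp j h)
    have hxj : x j ≠ 0 := hj
    positivity

theorem dotProduct_diagonal_mulVec_self_nonpos {w x : n → ℝ}
    (hx : x ∈ coordSubspace {i | ¬ 0 < w i}) : x ⬝ᵥ diagonal w *ᵥ x ≤ 0 := by
  rw [dotProduct_diagonal_mulVec_self]
  refine Finset.sum_nonpos fun i _ => ?_
  by_cases h : 0 < w i
  · simp [apply_eq_zero_of_mem_coordSubspace hx (by simpa using h)]
  · exact mul_nonpos_of_nonpos_of_nonneg (not_lt.1 h) (sq_nonneg _)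

end CoordSubspace

section Inertia

variable {n : Type*} [Fintype n] [DecidableEq n]

theorem card_pos_le_of_transpose_mul_diagonal_mul {w w' : n → ℝ} {M : Matrix n n ℝ}
    (hM : IsUnit M.det) (h : Mᵀ * diagonal w * M = diagonal w') :
    #{i | 0 < w' i} ≤ #{i | 0 < w i} := by
  have hinj : Function.Injective (toLin' M) :=
    mulVec_injective_iff_isUnit.2 ((isUnit_iff_isUnit_det M).2 hM)
  set W := (coordSubspace {i | 0 < w' i}).map (toLin' M)
  have hW : finrank ℝ W = #{i | 0 < w' i} := by
    rw [← (Submodule.equivMapOfInjective _ hinj _).finrank_eq, finrank_coordSubspace]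
  have hdim := Submodule.finrank_add_finrank_le_of_pos_of_nonpos
    (fun x => x ⬝ᵥ diagonal w *ᵥ x) (W := W) (Z := coordSubspace {i | ¬ 0 < w i}) ?_
    (fun x hx => dotProduct_diagonal_mulVec_self_nonpos hx)
  · have hsplit := card_filter_add_card_filter_not (s := univ) (fun i => 0 < w i)
    rw [hW, finrank_coordSubspace, finrank_fintype_fun_eq_card, ← card_univ] at hdim
    omega
  · rintro _ ⟨y, hy, rfl⟩ hMy
    have hy0 : y ≠ 0 := by rintro rfl; exact hMy (map_zero _)
    rw [toLin'_apply, dotProduct_mulVec_mulVec_self, h]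
    exact dotProduct_diagonal_mulVec_self_pos hy hy0

variable {A M N : Matrix n n ℝ} {d e : n → ℝ}

theorem card_pos_le_of_diagonalizations (hM : IsUnit M.det) (hN : IsUnit N.det)
    (hAM : Mᵀ * A * M = diagonal d) (hAN : Nᵀ * A * N = diagonal e) :
    #{i | 0 < e i} ≤ #{i | 0 < d i} := by
  refine card_pos_le_of_transpose_mul_diagonal_mul (M := M⁻¹ * N) ?_ ?_
  · rw [det_mul]
    exact (isUnit_nonsing_inv_det M hM).mul hN
  · have hMt : IsUnit Mᵀ.det := by rwa [det_transpose]
    rw [← hAM, ← hAN, transpose_mul, transpose_nonsing_inv]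
    simp only [Matrix.mul_assoc, mul_nonsing_inv_cancel_left _ _ hM,
      nonsing_inv_mul_cancel_left _ _ hMt]

theorem card_pos_eq_of_diagonalizations (hM : IsUnit M.det) (hN : IsUnit N.det)
    (hAM : Mᵀ * A * M = diagonal d) (hAN : Nᵀ * A * N = diagonal e) :
    #{i | 0 < d i} = #{i | 0 < e i} :=
  le_antisymm (card_pos_le_of_diagonalizations hN hM hAN hAM)
    (card_pos_le_of_diagonalizations hM hN hAM hAN)

theorem card_neg_eq_of_diagonalizations (hM : IsUnit M.det) (hN : IsUnit N.det)
    (hAM : Mᵀ * A * M = diagonal d) (hAN : Nᵀ * A * N = diagonal e) :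
    #{i | d i < 0} = #{i | e i < 0} := by
  have hneg : ∀ {P : Matrix n n ℝ} {f : n → ℝ}, Pᵀ * A * P = diagonal f →
      Pᵀ * -A * P = diagonal (-f) := fun h => by
    rw [Matrix.mul_neg, Matrix.neg_mul, h, diagonal_neg]
    rfl
  simpa using card_pos_eq_of_diagonalizations hM hN (hneg hAM) (hneg hAN)

theorem IsHermitian.transpose_eigenvectorUnitary_mul_mul (hA : A.IsHermitian) :
    (hA.eigenvectorUnitary : Matrix n n ℝ)ᵀ * A * hA.eigenvectorUnitary =
      diagonal hA.eigenvalues := by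
  have h := hA.conjStarAlgAut_star_eigenvectorUnitary
  rw [Unitary.conjStarAlgAut_star_apply, star_eq_conjTranspose,
    conjTranspose_eq_transpose_of_trivial] at h
  simpa using h

theorem IsHermitian.card_eigenvalues_pos_sub_card_neg (hA : A.IsHermitian)
    (hM : IsUnit M.det) (hAM : Mᵀ * A * M = diagonal d) :
    (#{i | 0 < hA.eigenvalues i} : ℤ) - #{i | hA.eigenvalues i < 0} =
      ∑ i, (SignType.sign (d i) : ℤ) := by
  have hU : IsUnit (hA.eigenvectorUnitary : Matrix n n ℝ).det :=
    (isUnit_iff_isUnit_det _).1 Unitary.isUnit_coe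
  rw [card_pos_eq_of_diagonalizations hU hM hA.transpose_eigenvectorUnitary_mul_mul hAM,
    card_neg_eq_of_diagonalizations hU hM hA.transpose_eigenvectorUnitary_mul_mul hAM,
    card_pos_sub_card_neg_eq_sum_sign]

end Inertia

end Matrix

/-- The intersection matrix of the star-shaped plumbing graph `Γ₀`
(central vertex of weight 0 joined to `k` leaves of weights `p₁, …, p_k`)
is congruent over `ℝ` to `diag(-eHat, p₁, …, p_k)` where `eHat = Σ 1/pᵢ`;
consequently its signature equals `s - sgn(eHat)` where `s = Σ sgn(pᵢ)`. -/
theorem stmt_18 (k : ℕ) (p : Fin k → ℤ) (hp : ∀ i, p i ≠ 0)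
    (Q : Matrix (Unit ⊕ Fin k) (Unit ⊕ Fin k) ℝ)
    (hQ00 : ∀ u v : Unit, Q (Sum.inl u) (Sum.inl v) = 0)
    (hQ0i : ∀ (u : Unit) (i : Fin k), Q (Sum.inl u) (Sum.inr i) = 1)
    (hQi0 : ∀ (i : Fin k) (u : Unit), Q (Sum.inr i) (Sum.inl u) = 1)
    (hQij : ∀ i j : Fin k,
      Q (Sum.inr i) (Sum.inr j) = if i = j then (p i : ℝ) else 0)
    (eHat : ℝ) (heHat : eHat = ∑ i, (1 : ℝ) / (p i : ℝ))
    (s : ℤ) (hs : s = ∑ i, Int.sign (p i)) :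
    (∃ M : Matrix (Unit ⊕ Fin k) (Unit ⊕ Fin k) ℝ,
        IsUnit M.det ∧
        Mᵀ * Q * M =
          Matrix.diagonal (Sum.elim (fun _ => -eHat) fun i => (p i : ℝ))) ∧
    (eHat ≠ 0 →
      ∀ hH : Q.IsHermitian,
        ((Finset.univ.filter fun i => 0 < hH.eigenvalues i).card : ℤ)
          - ((Finset.univ.filter fun i => hH.eigenvalues i < 0).card : ℤ)
          = s - (if 0 < eHat then 1 else if eHat < 0 then -1 else 0)) := by
  set B : Matrix Unit (Fin k) ℝ := of fun _ _ => 1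
  set D : Matrix (Fin k) (Fin k) ℝ := diagonal fun i => (p i : ℝ)
  have hpR : ∀ i, (p i : ℝ) ≠ 0 := fun i => Int.cast_ne_zero.2 (hp i)
  have hQ : Q = fromBlocks 0 B Bᵀ D := by
    ext (u | i) (v | j) <;> simp [B, D, hQ00, hQ0i, hQi0, hQij, diagonal_apply]
  have hD : IsUnit D.det := by
    simpa [D, det_diagonal, prod_ne_zero_iff] using hpR
  have hDinv : D⁻¹ = diagonal fun i => (p i : ℝ)⁻¹ := inv_eq_left_inv (by simp [D, hpR])
  have hSchur : (0 : Matrix Unit Unit ℝ) - B * D⁻¹ * Bᵀ = diagonal fun _ => -eHat := by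
    ext u v
    simp [B, hDinv, heHat, mul_apply, diagonal_apply]
  set M : Matrix (Unit ⊕ Fin k) (Unit ⊕ Fin k) ℝ := fromBlocks 1 0 (-(D⁻¹ * Bᵀ)) 1
  have hM : IsUnit M.det := by simp [M]
  have hcong : Mᵀ * Q * M = diagonal (Sum.elim (fun _ => -eHat) fun i => (p i : ℝ)) := by
    rw [hQ, transpose_mul_fromBlocks_mul_eq_schur 0 B hD (diagonal_transpose _), hSchur,
      fromBlocks_diagonal]
  refine ⟨⟨M, hM, hcong⟩, fun _ hH => ?_⟩
  rw [hH.card_eigenvalues_pos_sub_card_neg hM hcong, Fintype.sum_sum_type, hs]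
  have hsign :
      (SignType.sign eHat : ℤ) = if 0 < eHat then 1 else if eHat < 0 then -1 else 0 := by
    rw [sign_apply]
    split_ifs <;> rfl
  simp [Left.sign_neg, sign_intCast, Int.sign_eq_sign, hsign, neg_add_eq_sub]
end

section
/- Define B: ℤ^(a+b+c) → ℤ² by B(x₁,...,x_a, y₁,...,y_b, z₁,...,z_c) = (Σxᵢ − Σz_k, Σy_j − Σz_k). Then B is surjective, and the number of lattice points in its image of the cube {−1,1}^(a+b+c), i.e. |B({±1}^(a+b+c))|, equals ab + ac + bc + a + b + c + 1, for all positive integers a, b, c. -/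
/-!
The sums of `n` signs are exactly the integers `2k - n` with `0 ≤ k ≤ n`, so the image of the
cube is an affine copy of the projection of the box `[0,a] × [0,b] × [0,c]` along `(1,1,1)`.
Each fibre of that projection meets the box in a segment along `(1,1,1)` whose lowest point has
a zero coordinate, and that point is unique; so the image is in bijection with the box minus the
shifted box `[1,a] × [1,b] × [1,c]`, which has `(a+1)(b+1)(c+1) - abc` points.
-/

open Finset

theorem sum_ite_mem_one_neg_one {ι : Type*} [Fintype ι] [DecidableEq ι] (T : Finset ι) :
    ∑ i, (if i ∈ T then (1 : ℤ) else -1) = 2 * #T - Fintype.card ι := by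
  have hcompl : (#Tᶜ : ℤ) = Fintype.card ι - #T := by
    rw [card_compl, Nat.cast_sub T.card_le_univ]
  rw [sum_ite, sum_const, sum_const, filter_mem_eq_inter, univ_inter, filter_not,
    filter_mem_eq_inter, univ_inter, ← compl_eq_univ_sdiff]
  simp only [nsmul_eq_mul, mul_one, mul_neg, hcompl]
  ring

theorem exists_sign_vector_sum_eq_iff {ι : Type*} [Fintype ι] (s : ℤ) :
    (∃ f : ι → ℤ, (∀ i, f i = 1 ∨ f i = -1) ∧ ∑ i, f i = s) ↔
      ∃ k : ℤ, 0 ≤ k ∧ k ≤ Fintype.card ι ∧ s = 2 * k - Fintype.card ι := by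
  classical
  constructor
  · rintro ⟨f, hf, rfl⟩
    have hfT : f = fun i => if i ∈ univ.filter (f · = 1) then 1 else -1 := by
      funext i
      rcases hf i with h | h <;> simp only [mem_filter, mem_univ, true_and, h] <;> norm_num
    refine ⟨#(univ.filter (f · = 1)), Nat.cast_nonneg _, Nat.cast_le.mpr (card_le_univ _), ?_⟩
    rw [hfT, sum_ite_mem_one_neg_one, ← hfT]
  · rintro ⟨k, hk0, hkn, rfl⟩
    lift k to ℕ using hk0
    obtain ⟨T, -, hT⟩ :=
      exists_subset_card_eq (s := univ) (mod_cast hkn : k ≤ #(univ : Finset ι))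
    exact ⟨fun i => if i ∈ T then 1 else -1, fun i => by by_cases h : i ∈ T <;> simp [h],
      by rw [sum_ite_mem_one_neg_one, hT]⟩

def projDiag (t : ℤ × ℤ × ℤ) : ℤ × ℤ := (t.1 - t.2.2, t.2.1 - t.2.2)

noncomputable def intBox (a b c : ℕ) : Finset (ℤ × ℤ × ℤ) := Icc (0, 0, 0) (a, b, c)

noncomputable def hexagon (a b c : ℕ) : Finset (ℤ × ℤ) := (intBox a b c).image projDiag

theorem hexagon_eq_image_corner (a b c : ℕ) :
    hexagon a b c = (intBox a b c \ Icc (1, 1, 1) (a, b, c)).image projDiag := by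
  refine (image_subset_image sdiff_subset).antisymm' fun p hp => ?_
  obtain ⟨⟨x, y, z⟩, ht, rfl⟩ := mem_image.mp hp
  set m := min (min x y) z
  refine mem_image.mpr
    ⟨(x - m, y - m, z - m), ?_, by simp only [projDiag, sub_sub_sub_cancel_right]⟩
  simp only [intBox, mem_sdiff, mem_Icc, Prod.mk_le_mk] at ht ⊢
  omega

theorem injOn_projDiag_corner (a b c : ℕ) :
    Set.InjOn projDiag ↑(intBox a b c \ Icc (1, 1, 1) (a, b, c)) := by
  -- Points with equal projections differ by `d • (1,1,1)`; if `d ≠ 0`, all coordinates of one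
  -- of them are positive.
  rintro ⟨x, y, z⟩ ht ⟨x', y', z'⟩ ht' h
  simp only [intBox, coe_sdiff, Set.mem_sdiff, mem_coe, mem_Icc, Prod.mk_le_mk, projDiag,
    Prod.mk.injEq] at ht ht' h ⊢
  omega

theorem card_hexagon (a b c : ℕ) :
    #(hexagon a b c) = a * b + a * c + b * c + a + b + c + 1 := by
  rw [hexagon_eq_image_corner, card_image_of_injOn (injOn_projDiag_corner a b c), intBox,
    card_sdiff_of_subset (Icc_subset_Icc_left (by simp [Prod.mk_le_mk]))]
  simp only [card_Icc_prod, Int.card_Icc, sub_zero, add_sub_cancel_right]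
  simp only [← Nat.cast_add_one, Int.toNat_natCast]
  refine Nat.sub_eq_of_eq_add ?_
  ring

theorem image_sign_cube_eq (a b c : ℕ) :
    (fun v : (Fin a → ℤ) × (Fin b → ℤ) × (Fin c → ℤ) =>
        (∑ i, v.1 i - ∑ k, v.2.2 k, ∑ j, v.2.1 j - ∑ k, v.2.2 k)) ''
      {v | (∀ i, v.1 i = 1 ∨ v.1 i = -1) ∧ (∀ j, v.2.1 j = 1 ∨ v.2.1 j = -1) ∧
        (∀ k, v.2.2 k = 1 ∨ v.2.2 k = -1)} =
      ↑((hexagon a b c).image fun p => (2 * p.1 + (c - a : ℤ), 2 * p.2 + (c - b : ℤ))) := by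
  ext ⟨p, q⟩
  simp only [Set.mem_image, Set.mem_ofPred_eq, coe_image, hexagon, intBox, projDiag, mem_coe,
    mem_Icc, Prod.exists, Prod.mk_le_mk, Prod.mk.injEq]
  constructor
  · rintro ⟨x, y, z, ⟨hx, hy, hz⟩, hp, hq⟩
    obtain ⟨k, hk0, hka, hxk⟩ := (exists_sign_vector_sum_eq_iff _).mp ⟨x, hx, rfl⟩
    obtain ⟨l, hl0, hlb, hyl⟩ := (exists_sign_vector_sum_eq_iff _).mp ⟨y, hy, rfl⟩
    obtain ⟨m, hm0, hmc, hzm⟩ := (exists_sign_vector_sum_eq_iff _).mp ⟨z, hz, rfl⟩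
    rw [Fintype.card_fin] at hka hlb hmc hxk hyl hzm
    exact ⟨k - m, l - m, ⟨k, l, m, by omega⟩, by omega, by omega⟩
  · rintro ⟨_, _, ⟨k, l, m, ⟨⟨hk0, hl0, hm0⟩, hka, hlb, hmc⟩, rfl, rfl⟩, hp, hq⟩
    obtain ⟨x, hx, hxk⟩ := (exists_sign_vector_sum_eq_iff (ι := Fin a) (2 * k - a)).mpr
      ⟨k, hk0, by simpa using hka, by simp⟩
    obtain ⟨y, hy, hyl⟩ := (exists_sign_vector_sum_eq_iff (ι := Fin b) (2 * l - b)).mpr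
      ⟨l, hl0, by simpa using hlb, by simp⟩
    obtain ⟨z, hz, hzm⟩ := (exists_sign_vector_sum_eq_iff (ι := Fin c) (2 * m - c)).mpr
      ⟨m, hm0, by simpa using hmc, by simp⟩
    exact ⟨x, y, z, ⟨hx, hy, hz⟩, by omega, by omega⟩

theorem stmt_19_general (a b c : ℕ) (ha : 0 < a) (hb : 0 < b)
    (B : ((Fin a → ℤ) × (Fin b → ℤ) × (Fin c → ℤ)) → ℤ × ℤ)
    (hB : ∀ v, B v =
      (∑ i, v.1 i - ∑ k, v.2.2 k, ∑ j, v.2.1 j - ∑ k, v.2.2 k)) :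
    Function.Surjective B ∧
    (B '' {v | (∀ i, v.1 i = 1 ∨ v.1 i = -1) ∧
               (∀ j, v.2.1 j = 1 ∨ v.2.1 j = -1) ∧
               (∀ k, v.2.2 k = 1 ∨ v.2.2 k = -1)}).ncard
      = a * b + a * c + b * c + a + b + c + 1 := by
  obtain rfl : B = _ := funext hB
  refine ⟨fun ⟨p, q⟩ => ⟨(Pi.single ⟨0, ha⟩ p, Pi.single ⟨0, hb⟩ q, 0), by simp⟩, ?_⟩
  have hinj : Function.Injective fun p : ℤ × ℤ => (2 * p.1 + (c - a : ℤ), 2 * p.2 + (c - b : ℤ)) :=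
    fun p p' h => by
      simp only [Prod.mk.injEq] at h
      ext <;> omega
  rw [image_sign_cube_eq, Set.ncard_coe_finset, card_image_of_injective _ hinj, card_hexagon]

/-- The map `B : ℤ^(a+b+c) → ℤ²`,
`B(x, y, z) = (Σxᵢ - Σz_k, Σy_j - Σz_k)`, is surjective, and the image of the
cube `{±1}^(a+b+c)` under `B` has exactly `ab + ac + bc + a + b + c + 1`
lattice points. -/
theorem stmt_19 (a b c : ℕ) (ha : 0 < a) (hb : 0 < b) (hc : 0 < c)
    (B : ((Fin a → ℤ) × (Fin b → ℤ) × (Fin c → ℤ)) → ℤ × ℤ)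
    (hB : ∀ v, B v =
      (∑ i, v.1 i - ∑ k, v.2.2 k, ∑ j, v.2.1 j - ∑ k, v.2.2 k)) :
    Function.Surjective B ∧
    (B '' {v | (∀ i, v.1 i = 1 ∨ v.1 i = -1) ∧
               (∀ j, v.2.1 j = 1 ∨ v.2.1 j = -1) ∧
               (∀ k, v.2.2 k = 1 ∨ v.2.2 k = -1)}).ncard
      = a * b + a * c + b * c + a + b + c + 1 :=
  stmt_19_general a b c ha hb B hB
end
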